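/- arXiv:1208.2918 — 2 statements merged into one kernel-verified Lean document; each statement's English description precedes it below -/
import Mathlib

section
/- Let (M, ℬ, μ) be a sigma-finite measure space, I a finite index set, and {τ_i}_{i∈I} measurable maps M → M with a common measurable left-inverse R (i.e., R ∘ τ_i = id for all i), such that μ ∘ τ_i⁻¹ ≪ μ with Radon–Nikodym derivatives g_i = d(μ∘τ_i⁻¹)/dμ satisfying Σ_{i∈I} g_i = 1 μ-a.e. Define operators S_i on L²(μ) by S_i f = χ_{τ_i(M)} · √(g_i) · (f ∘ R), assuming the sets τ_i(M) are measurable and pairwise disjoint with union M. Then the S_i satisfy the Cuntz relations: S_i* S_j = δ_{i,j}·Id on L²(μ), and Σ_{i∈I} S_i S_i* = Id, where S_i* φ = φ ∘ τ_i. -/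
/-! Since `R` is a measurable left inverse of `τ i` and `range (τ i)` is measurable, each `τ i` is
a measurable embedding, so change of variables against the Radon–Nikodym derivative gives
`∫ G ∘ τ i ∂μ = ∫ g i * G ∂μ` for every `G`. Taking `G = χ_{range (τ i)} · (f h) ∘ R` (which
satisfies `G ∘ τ i = f h`) gives `⟨S_i f, S_i h⟩ = ⟨f, h⟩`; for `i ≠ j` the supports of `S_i f`
and `S_j h` are disjoint. Taking `G = φ²`, summing over `i` and using `∑ i, g i = 1` gives the
second relation. -/

open MeasureTheory

/-- The operator `S f = χ_B · √g · (f ∘ R)` from a closed iterated function system. -/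
noncomputable def IFSOp {M : Type*} (B : Set M) (g : M → ℝ) (R : M → M)
    (f : M → ℝ) : M → ℝ :=
  fun x => B.indicator (fun y => Real.sqrt (g y) * f (R y)) x

open Set Function

section ChangeOfVariables

variable {α β : Type*} [MeasurableSpace α] [MeasurableSpace β] {μ : Measure α} {ν : Measure β}
  [SigmaFinite μ] [SigmaFinite ν] {τ : α → β}

theorem MeasurableEmbedding.integral_comp_eq_integral_rnDeriv_mul (hτ : MeasurableEmbedding τ)
    (hac : μ.map τ ≪ ν) (G : β → ℝ) :
    ∫ x, G (τ x) ∂μ = ∫ y, ((μ.map τ).rnDeriv ν y).toReal * G y ∂ν := by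
  have := hτ.sigmaFinite_map (μ := μ)
  rw [← hτ.integral_map, ← integral_rnDeriv_smul hac]
  rfl

theorem MeasurableEmbedding.integral_indicator_range_rnDeriv_mul_comp
    (hτ : MeasurableEmbedding τ) {R : β → α} (hRτ : LeftInverse R τ) (hac : μ.map τ ≪ ν)
    (F : α → ℝ) :
    ∫ y, (range τ).indicator (fun y => ((μ.map τ).rnDeriv ν y).toReal * F (R y)) y ∂ν
      = ∫ x, F x ∂μ := by
  simp_rw [indicator_mul_right]
  rw [← hτ.integral_comp_eq_integral_rnDeriv_mul hac]
  simp [hRτ _]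

end ChangeOfVariables

section IFSOp

variable {M : Type*} {B B' : Set M} {g g' : M → ℝ} {R : M → M} {f h : M → ℝ} {x : M}

theorem IFSOp_mul_IFSOp_of_disjoint (hB : Disjoint B B') :
    IFSOp B g R f x * IFSOp B' g' R h x = 0 := by
  by_cases hx : x ∈ B
  · simp [IFSOp, indicator_of_notMem (disjoint_left.mp hB hx)]
  · simp [IFSOp, indicator_of_notMem hx]

theorem IFSOp_mul_IFSOp (hg : 0 ≤ g x) :
    IFSOp B g R f x * IFSOp B g R h x = B.indicator (fun y => g y * (f (R y) * h (R y))) x := by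
  by_cases hx : x ∈ B
  · simp only [IFSOp, indicator_of_mem hx]
    linear_combination (f (R x) * h (R x)) * Real.mul_self_sqrt hg
  · simp [IFSOp, indicator_of_notMem hx]

end IFSOp

theorem ifs_cuntz_relations_general {M : Type*} [MeasurableSpace M]
    (μ : Measure M) [SigmaFinite μ] {I : Type*} [Fintype I] [DecidableEq I]
    (τ : I → M → M) (R : M → M) (hτ : ∀ i, Measurable (τ i)) (hR : Measurable R)
    (hRτ : ∀ i x, R (τ i x) = x)
    (hBmeas : ∀ i, MeasurableSet (Set.range (τ i)))
    (hdisj : ∀ i j, i ≠ j → Disjoint (Set.range (τ i)) (Set.range (τ j)))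
    (hac : ∀ i, μ.map (τ i) ≪ μ)
    (g : I → M → ℝ) (hg : ∀ i x, g i x = (((μ.map (τ i)).rnDeriv μ) x).toReal)
    (hclosed : ∀ᵐ x ∂μ, ∑ i, g i x = 1) :
    -- `S_i* S_j = δ_{i,j} Id`, weakly: `⟨S_i f, S_j h⟩ = δ_{i,j} ⟨f, h⟩`
    (∀ i j : I, ∀ f h : M → ℝ, MemLp f 2 μ → MemLp h 2 μ →
      ∫ x, IFSOp (Set.range (τ i)) (g i) R f x * IFSOp (Set.range (τ j)) (g j) R h x ∂μ
        = if i = j then ∫ x, f x * h x ∂μ else 0)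
    -- `Σ_i S_i S_i* = Id`, weakly: `Σ_i ‖S_i* φ‖² = ‖φ‖²` where `S_i* φ = φ ∘ τ_i`
    ∧ (∀ φ : M → ℝ, MemLp φ 2 μ →
        ∑ i : I, ∫ x, (φ (τ i x)) ^ 2 ∂μ = ∫ x, (φ x) ^ 2 ∂μ) := by
  have hemb : ∀ i, MeasurableEmbedding (τ i) := fun i =>
    .of_measurable_inverse (hτ i) (hBmeas i) hR (hRτ i)
  have hg_nonneg : ∀ i x, 0 ≤ g i x := fun i x => hg i x ▸ ENNReal.toReal_nonneg
  refine ⟨fun i j f h _ _ => ?_, fun φ hφ => ?_⟩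
  · split_ifs with hij
    · subst hij
      calc _ = ∫ x, (range (τ i)).indicator (fun y => g i y * (f (R y) * h (R y))) x ∂μ :=
            integral_congr_ae (ae_of_all _ fun x => IFSOp_mul_IFSOp (hg_nonneg i x))
        _ = ∫ x, f x * h x ∂μ := by
            simp only [hg]
            exact (hemb i).integral_indicator_range_rnDeriv_mul_comp (hRτ i) (hac i)
              (fun x => f x * h x)
    · simp [IFSOp_mul_IFSOp_of_disjoint (hdisj i j hij)]
  · have hg_le_one : ∀ i, ∀ᵐ x ∂μ, g i x ≤ 1 := fun i => hclosed.mono fun x hx =>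
      hx ▸ Finset.single_le_sum (fun k _ => hg_nonneg k x) (Finset.mem_univ i)
    have hg_meas : ∀ i, Measurable (g i) := fun i =>
      funext (hg i) ▸ (Measure.measurable_rnDeriv _ _).ennreal_toReal
    have hint : ∀ i, Integrable (fun x => g i x * φ x ^ 2) μ := fun i =>
      hφ.integrable_sq.bdd_mul (hg_meas i).aestronglyMeasurable
        ((hg_le_one i).mono fun x hx => by rwa [Real.norm_of_nonneg (hg_nonneg i x)])
    calc ∑ i, ∫ x, φ (τ i x) ^ 2 ∂μ = ∑ i, ∫ x, g i x * φ x ^ 2 ∂μ :=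
          Finset.sum_congr rfl fun i _ => by
            simp only [hg]
            exact (hemb i).integral_comp_eq_integral_rnDeriv_mul (hac i) (φ · ^ 2)
      _ = ∫ x, (∑ i, g i x) * φ x ^ 2 ∂μ := by
          simp_rw [Finset.sum_mul]
          exact (integral_finsetSum _ fun i _ => hint i).symm
      _ = ∫ x, φ x ^ 2 ∂μ :=
          integral_congr_ae (hclosed.mono fun x hx => by simp only [hx, one_mul])

/-- Cuntz relations for the operators `S_i f = χ_{τ_i(M)} √(g_i) (f ∘ R)` of a closed
iterated function system: `S_i* S_j = δ_{i,j} Id` (expressed weakly via inner products,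
using `S_i* φ = φ ∘ τ_i`) and `Σ_i S_i S_i* = Id` (expressed via `Σ_i ‖S_i* φ‖² = ‖φ‖²`). -/
theorem ifs_cuntz_relations {M : Type*} [MeasurableSpace M]
    (μ : Measure M) [SigmaFinite μ] {I : Type*} [Fintype I] [DecidableEq I]
    (τ : I → M → M) (R : M → M) (hτ : ∀ i, Measurable (τ i)) (hR : Measurable R)
    (hRτ : ∀ i x, R (τ i x) = x)
    (hBmeas : ∀ i, MeasurableSet (Set.range (τ i)))
    (hdisj : ∀ i j, i ≠ j → Disjoint (Set.range (τ i)) (Set.range (τ j)))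
    (hcover : (⋃ i, Set.range (τ i)) = Set.univ)
    (hac : ∀ i, μ.map (τ i) ≪ μ)
    (g : I → M → ℝ) (hg : ∀ i x, g i x = (((μ.map (τ i)).rnDeriv μ) x).toReal)
    (hclosed : ∀ᵐ x ∂μ, ∑ i, g i x = 1) :
    -- `S_i* S_j = δ_{i,j} Id`, weakly: `⟨S_i f, S_j h⟩ = δ_{i,j} ⟨f, h⟩`
    (∀ i j : I, ∀ f h : M → ℝ, MemLp f 2 μ → MemLp h 2 μ →
      ∫ x, IFSOp (Set.range (τ i)) (g i) R f x * IFSOp (Set.range (τ j)) (g j) R h x ∂μ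
        = if i = j then ∫ x, f x * h x ∂μ else 0)
    -- `Σ_i S_i S_i* = Id`, weakly: `Σ_i ‖S_i* φ‖² = ‖φ‖²` where `S_i* φ = φ ∘ τ_i`
    ∧ (∀ φ : M → ℝ, MemLp φ 2 μ →
        ∑ i : I, ∫ x, (φ (τ i x)) ^ 2 ∂μ = ∫ x, (φ x) ^ 2 ∂μ) :=
  ifs_cuntz_relations_general μ τ R hτ hR hRτ hBmeas hdisj hac g hg hclosed
end

section
/- The Brownian motion kernel admits the series expansion min(t,s) = t·s + (2/π²) Σ_{k=1}^∞ sin(kπt)·sin(kπs)/k² for all t, s ∈ [0,1]. -/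
/-!
By product-to-sum, `2 sin(kπt) sin(kπs) = cos(kπ(t - s)) - cos(kπ(t + s))`, so the series is a
difference of two values of the Fourier series `∑ cos(kπy)/k² = π² (y²/4 - y/2 + 1/6)` on `[0, 2]`
(the second Bernoulli polynomial at `y/2`). Taking `y = |t - s|` and `y = t + s`, the quadratic
terms cancel down to `π² (min t s - t s)` because `min t s = (t + s - |t - s|)/2`.
-/

open Real

lemma Polynomial.aeval_bernoulli_two {K : Type*} [Field K] [CharZero K] (x : K) :
    Polynomial.aeval x (Polynomial.bernoulli 2) = x ^ 2 - x + 6⁻¹ := by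
  simp [Polynomial.bernoulli, Finset.sum_range_succ]
  ring

lemma hasSum_cos_nat_succ_mul_pi_div_sq {y : ℝ} (hy : y ∈ Set.Icc (0 : ℝ) 2) :
    HasSum (fun k : ℕ => cos ((k + 1) * π * y) / (k + 1) ^ 2)
      (π ^ 2 * (y ^ 2 / 4 - y / 2 + 1 / 6)) := by
  have hx : y / 2 ∈ Set.Icc (0 : ℝ) 1 := ⟨by linarith [hy.1], by linarith [hy.2]⟩
  have h := hasSum_one_div_nat_pow_mul_cos (k := 1) one_ne_zero hx
  -- the dropped `n = 0` term is `1 / 0 ^ 2 * cos 0 = 0`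
  rw [← hasSum_nat_add_iff' 1] at h
  norm_num [Polynomial.aeval_bernoulli_two] at h
  rw [show (2 * π) ^ 2 / 2 / 2 * ((y / 2) ^ 2 - y / 2 + 1 / 6)
      = π ^ 2 * (y ^ 2 / 4 - y / 2 + 1 / 6) by ring] at h
  exact h.congr_fun fun k => by ring_nf

lemma hasSum_sin_mul_sin_div_sq {t s : ℝ} (ht : t ∈ Set.Icc (0 : ℝ) 1)
    (hs : s ∈ Set.Icc (0 : ℝ) 1) :
    HasSum (fun k : ℕ => sin ((k + 1) * π * t) * sin ((k + 1) * π * s) / (k + 1) ^ 2)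
      (π ^ 2 / 2 * (min t s - t * s)) := by
  have hdiff : |t - s| ∈ Set.Icc (0 : ℝ) 2 :=
    ⟨abs_nonneg _, abs_sub_le_iff.mpr ⟨by linarith [ht.2, hs.1], by linarith [ht.1, hs.2]⟩⟩
  have hsum : t + s ∈ Set.Icc (0 : ℝ) 2 :=
    ⟨by linarith [ht.1, hs.1], by linarith [ht.2, hs.2]⟩
  have h := ((hasSum_cos_nat_succ_mul_pi_div_sq hdiff).sub
    (hasSum_cos_nat_succ_mul_pi_div_sq hsum)).div_const 2
  have hmin : min t s = (t + s - |t - s|) / 2 := by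
    linarith [min_add_max t s, max_sub_min_eq_abs' t s]
  rw [show (π ^ 2 * (|t - s| ^ 2 / 4 - |t - s| / 2 + 1 / 6)
      - π ^ 2 * ((t + s) ^ 2 / 4 - (t + s) / 2 + 1 / 6)) / 2 = π ^ 2 / 2 * (min t s - t * s) by
    rw [hmin, sq_abs]; ring] at h
  refine h.congr_fun fun k => ?_
  have hcos : cos ((k + 1) * π * |t - s|) = cos ((k + 1) * π * (t - s)) := by
    conv_rhs => rw [← cos_abs, abs_mul, abs_of_nonneg (by positivity : (0 : ℝ) ≤ (k + 1) * π)]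
  rw [hcos, mul_sub, mul_add, cos_sub, cos_add]
  ring

/-- Series expansion of the Brownian motion kernel:
`min(t,s) = ts + (2/π²) Σ_{k≥1} sin(kπt) sin(kπs)/k²` for `t, s ∈ [0,1]`. -/
theorem brownian_kernel_series (t s : ℝ)
    (ht : t ∈ Set.Icc (0:ℝ) 1) (hs : s ∈ Set.Icc (0:ℝ) 1) :
    min t s = t * s + (2 / Real.pi ^ 2) *
      ∑' k : ℕ, Real.sin ((k + 1) * Real.pi * t) * Real.sin ((k + 1) * Real.pi * s)
        / (k + 1) ^ 2 := by
  rw [(hasSum_sin_mul_sin_div_sq ht hs).tsum_eq]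
  field_simp
  ring
end
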